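/- A threshold graph G of order n ≥ 3 with degree partition D_0, D_1, ..., D_m is hamiltonian if and only if D_0 = ∅, Σ_{j=1}^k |D_j| < Σ_{j=1}^k |D_{m+1−j}| for all k = 1, ..., ⌊(m−1)/2⌋, and, in case m is even, Σ_{j=1}^{m/2} |D_j| ≤ Σ_{j=1}^{m/2} |D_{m+1−j}|. -/

import Mathlib

open SimpleGraph Finset

/-- A threshold graph: there exist a nonnegative vertex weight function and a
nonnegative threshold `t` such that distinct vertices are adjacent iff the sum
of their weights exceeds `t`. -/
def SimpleGraph.IsThreshold {V : Type} (G : SimpleGraph V) : Prop :=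
  ∃ (f : V → ℝ) (t : ℝ), (∀ v, 0 ≤ f v) ∧ 0 ≤ t ∧
    ∀ u v : V, u ≠ v → (G.Adj u v ↔ f u + f v > t)

/-- Degree of a vertex (no decidability assumptions). -/
noncomputable def SimpleGraph.deg {V : Type} [Fintype V] [DecidableEq V] (G : SimpleGraph V) (v : V) : ℕ :=
  Nat.card {u // G.Adj v u}

/-- `δ 0 = 0 < δ 1 < ⋯ < δ m` are exactly the degrees occurring in `G`;
the degree partition of `G` is `D_i = {v : deg v = δ i}`, `i = 0, …, m`. -/
structure SimpleGraph.DegreePartition {V : Type} [Fintype V] [DecidableEq V] (G : SimpleGraph V)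
    (m : ℕ) (δ : ℕ → ℕ) : Prop where
  zero : δ 0 = 0
  mono : ∀ i j, i < j → j ≤ m → δ i < δ j
  cover : ∀ v : V, ∃ i ≤ m, G.deg v = δ i
  attained : ∀ i, 1 ≤ i → i ≤ m → ∃ v : V, G.deg v = δ i

/-- The degree set `D_i` of the degree partition. -/
noncomputable def SimpleGraph.Dset {V : Type} [Fintype V] [DecidableEq V] (G : SimpleGraph V)
    (δ : ℕ → ℕ) (i : ℕ) : Finset V :=
  Finset.univ.filter (fun v => G.deg v = δ i)

/-- A key edge of a threshold graph with degree partition `D_0, …, D_m`: an edge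
joining `D_k` and `D_{m+1-k}` for some `1 ≤ k ≤ ⌈m/2⌉`. -/
def SimpleGraph.IsKeyEdge {V : Type} [Fintype V] [DecidableEq V] (G : SimpleGraph V)
    (m : ℕ) (δ : ℕ → ℕ) (e : Sym2 V) : Prop :=
  e ∈ G.edgeSet ∧ ∃ x y k, e = s(x, y) ∧ 1 ≤ k ∧ k ≤ (m + 1) / 2 ∧
    G.deg x = δ k ∧ G.deg y = δ (m + 1 - k)

/-- The number of Hamilton cycles of `G`, counted as unordered spanning cycles
(a cycle is identified with its edge set). -/
noncomputable def SimpleGraph.hamCycleCount {V : Type} [Fintype V] [DecidableEq V]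
    (G : SimpleGraph V) : ℕ :=
  Nat.card {s : Finset (Sym2 V) // ∃ (v : V) (w : G.Walk v v),
    w.IsHamiltonianCycle ∧ w.edges.toFinset = s}

/-- The multiset of degrees of `G`. -/
noncomputable def SimpleGraph.degMultiset {V : Type} [Fintype V] [DecidableEq V] (G : SimpleGraph V) :
    Multiset ℕ :=
  Finset.univ.val.map G.deg

/-- The degree sequence `n-1, n-1, n-2, …, ⌈n/2⌉, ⌈n/2⌉, …, 3, 2` of the graph `Gₙ`,
as a multiset: the values `2, …, n-1` together with an extra copy of `⌈n/2⌉` and of `n-1`. -/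
def gnDegSeq (n : ℕ) : Multiset ℕ :=
  (Multiset.range (n - 2)).map (· + 2) + {(n + 1) / 2, n - 1}

/-- An independent set in a graph. -/
def SimpleGraph.IsIndepSet' {V : Type} (G : SimpleGraph V) (S : Set V) : Prop :=
  ∀ u ∈ S, ∀ v ∈ S, u ≠ v → ¬ G.Adj u v

/-!
In a threshold graph the neighbourhoods are nested along the degree order, so the neighbourhood of a
vertex `v` consists of all other vertices whose class is at least some threshold `ρ(v)`. Since the
degrees of the classes are distinct, `ρ` is strictly decreasing on the classes `1, …, m`, hence
`ρ(v) = m + 1 - i` for `v ∈ D_i`: two distinct vertices of classes `i, j ≥ 1` are adjacent iff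
`i + j ≥ m + 1`.

Consequently every neighbour of `L_k = D_1 ∪ ⋯ ∪ D_k` lies in `U_k = D_{m+1-k} ∪ ⋯ ∪ D_m`. Going
once around a Hamiltonian cycle, the successor map injects `L_k` into `U_k`; if it were onto, the
predecessor map would be onto as well, `L_k ∪ U_k` would be closed under the successor map, hence be
everything, which fails as soon as `D_{k+1}` lies outside it (`2k < m`).

Conversely, list the vertices by increasing class, let `a_0, a_1, …, a_{p-1}` be those of class at
most `m/2` and `b_0, b_1, …, b_{q-1}` the others in decreasing order. The `b`'s form a clique, and
the counting conditions give `p ≤ q` and make `a_s` adjacent to `b_t` whenever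
`t ≤ s + 1`; so `b_0 a_0 b_1 a_1 ⋯ b_{p-1} a_{p-1} b_p ⋯ b_{q-1}` is a Hamiltonian cycle.
-/

theorem Nat.eq_add_one_sub_of_strictAntiOn {m : ℕ} {r : ℕ → ℕ} (hr : StrictAntiOn r (Set.Icc 1 m))
    (hmaps : Set.MapsTo r (Set.Icc 1 m) (Set.Icc 1 m)) {i : ℕ} (hi : i ∈ Set.Icc 1 m) :
    r i = m + 1 - i := by
  have key : ∀ a b, 1 ≤ a → a ≤ b → b ≤ m → r b + (b - a) ≤ r a := by
    intro a b ha hab hbm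
    induction b, hab using Nat.le_induction with
    | base => simp
    | succ b hab ih =>
      have := hr ⟨ha.trans hab, by omega⟩ ⟨by omega, hbm⟩ (Nat.lt_succ_self b)
      have := ih (by omega)
      omega
  have h₁ := key 1 i le_rfl hi.1 hi.2
  have h₂ := key i m hi.1 hi.2 le_rfl
  have h₃ := hmaps ⟨le_rfl, hi.1.trans hi.2⟩
  have h₄ := hmaps ⟨hi.1.trans hi.2, le_rfl⟩
  simp only [Set.mem_Icc] at h₃ h₄
  omega

section Sorting

variable {α β : Type*} [Fintype α] [LinearOrder β]

theorem Fintype.exists_bijective_monotone (κ : α → β) :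
    ∃ g : Fin (Fintype.card α) → α, Function.Bijective g ∧ Monotone (κ ∘ g) := by
  set e := (Fintype.equivFin α).symm
  exact ⟨e ∘ Tuple.sort (κ ∘ e), e.bijective.comp (Tuple.sort _).bijective,
    Tuple.monotone_sort (κ ∘ e)⟩

theorem Function.Bijective.le_iff_lt_card_filter {n : ℕ} {g : Fin n → α}
    (hg : Function.Bijective g) {κ : α → β} (hκ : Monotone (κ ∘ g)) (x : Fin n) (θ : β) :
    κ (g x) ≤ θ ↔ (x : ℕ) < #{a | κ a ≤ θ} := by
  have hcard : #{y | κ (g y) ≤ θ} = #{a | κ a ≤ θ} :=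
    card_nbij g (fun y hy => by simpa using hy) hg.1.injOn fun a ha => by
      obtain ⟨y, rfl⟩ := hg.2 a
      exact ⟨y, by simpa using ha, rfl⟩
  rw [← hcard]
  constructor
  · intro h
    have hsub : Iic x ⊆ univ.filter fun y => κ (g y) ≤ θ := fun y hy => by
      simpa using (hκ (mem_Iic.1 hy)).trans h
    simpa using card_le_card hsub
  · intro h
    by_contra! hx
    have hsub : (univ.filter fun y => κ (g y) ≤ θ) ⊆ Iio x := fun y hy => by
      simp only [mem_filter_univ] at hy
      exact mem_Iio.2 (lt_of_not_ge fun hxy => (hx.trans_le (hκ hxy)).not_ge hy)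
    simpa using (card_le_card hsub).trans_lt' h

theorem card_filter_add_one_le_add_card_filter_le (κ : α → ℕ) (θ : ℕ) :
    #{a | θ + 1 ≤ κ a} + #{a | κ a ≤ θ} = Fintype.card α := by
  rw [add_comm, ← card_univ, ← card_filter_add_card_filter_not (s := univ) fun a => κ a ≤ θ]
  simp only [not_le, Nat.lt_iff_add_one_le]

theorem two_mul_card_filter_le_half_le {κ : α → ℕ} {m : ℕ} (h0 : ∀ a, 0 < κ a)
    (hlt : ∀ k, 1 ≤ k → 2 * k < m → #{a | κ a ≤ k} < #{a | m + 1 - k ≤ κ a})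
    (hle : Even m → #{a | κ a ≤ m / 2} ≤ #{a | m + 1 - m / 2 ≤ κ a}) :
    2 * #{a | κ a ≤ m / 2} ≤ Fintype.card α := by
  have hcompl := card_filter_add_one_le_add_card_filter_le κ (m / 2)
  rcases Nat.even_or_odd m with ⟨r, hr⟩ | ⟨r, hr⟩
  · have := hle ⟨r, hr⟩
    rw [show m + 1 - m / 2 = m / 2 + 1 by omega] at this
    omega
  · rw [show m / 2 = r by omega] at hcompl ⊢
    rcases Nat.eq_zero_or_pos r with rfl | hr0
    · simp [fun a => (h0 a).ne']
    · have hmono : #{a | m + 1 - r ≤ κ a} ≤ #{a | r + 1 ≤ κ a} :=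
        card_le_card (monotone_filter_right _ fun a h => by omega)
      have := hlt r hr0 (by omega)
      omega

end Sorting

/-- The position of the `k`-th vertex of the cycle `b₀ a₀ b₁ a₁ … b_{p-1} a_{p-1} b_p … b_{n-p-1}`,
where `a_s` sits at position `s` and `b_t` at position `n - 1 - t`. -/
def interleave (n p k : ℕ) : ℕ :=
  if k < 2 * p then (if k % 2 = 0 then n - 1 - k / 2 else k / 2) else n - 1 - k + p

theorem interleave_lt {n p k : ℕ} (hk : k < n) : interleave n p k < n := by
  unfold interleave
  split_ifs <;> omega

namespace SimpleGraph

section Labelling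

variable {V : Type*} {G : SimpleGraph V}

structure IsHamiltonianLabelling (G : SimpleGraph V) {n : ℕ} (F : ZMod n → V) : Prop where
  bijective : Function.Bijective F
  adj : ∀ i, G.Adj (F i) (F (i + 1))

theorem IsHamiltonianLabelling.exists_adj {n : ℕ} {F : ZMod n → V}
    (hF : G.IsHamiltonianLabelling F) (v : V) : ∃ u, G.Adj v u := by
  obtain ⟨i, rfl⟩ := hF.bijective.2 v
  exact ⟨_, hF.adj i⟩

variable [Fintype V]

theorem IsHamiltonianLabelling.eq_univ {n : ℕ} [NeZero n] {F : ZMod n → V}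
    (hF : G.IsHamiltonianLabelling F) {s : Finset V} (hs : s.Nonempty)
    (hsucc : ∀ i, F i ∈ s → F (i + 1) ∈ s) : s = univ := by
  obtain ⟨v, hv⟩ := hs
  obtain ⟨i, rfl⟩ := hF.bijective.2 v
  have hk : ∀ k : ℕ, F (i + k) ∈ s := by
    intro k
    induction k with
    | zero => simpa using hv
    | succ k ih => simpa [add_assoc] using hsucc _ ih
  refine eq_univ_of_forall fun w => ?_
  obtain ⟨j, rfl⟩ := hF.bijective.2 w
  simpa using hk (j - i).val

theorem exists_isHamiltonianLabelling_of_interleave {n p : ℕ} (hn : 2 ≤ n) (hp : 2 * p ≤ n)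
    {g : Fin n → V} (hg : Function.Bijective g)
    (hlow : ∀ x y : Fin n, (x : ℕ) < p → p ≤ (y : ℕ) → n ≤ x + y + 2 → G.Adj (g x) (g y))
    (hhigh : ∀ x y : Fin n, p ≤ (x : ℕ) → p ≤ (y : ℕ) → x ≠ y → G.Adj (g x) (g y)) :
    ∃ F : ZMod n → V, G.IsHamiltonianLabelling F := by
  have : NeZero n := ⟨by omega⟩
  have hadj : ∀ x y : Fin n, (x < p ∧ p ≤ y ∧ n ≤ x + y + 2) ∨ (y < p ∧ p ≤ x ∧ n ≤ x + y + 2) ∨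
      (p ≤ x ∧ p ≤ y ∧ (x : ℕ) ≠ y) → G.Adj (g x) (g y) := by
    rintro x y (h | h | h)
    · exact hlow x y h.1 h.2.1 h.2.2
    · exact (hlow y x h.1 h.2.1 (by omega)).symm
    · exact hhigh x y h.1 h.2.1 (Fin.val_ne_iff.1 h.2.2)
  refine ⟨fun i => g ⟨interleave n p i.val, interleave_lt i.val_lt⟩, ?_, fun i => ?_⟩
  · refine (Fintype.bijective_iff_injective_and_card _).2 ⟨fun i j hij => ?_, by
      rw [ZMod.card, ← Fintype.card_of_bijective hg, Fintype.card_fin]⟩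
    have hij := Fin.mk.inj_iff.1 (hg.1 hij)
    have := i.val_lt
    have := j.val_lt
    refine ZMod.val_injective _ ?_
    unfold interleave at hij
    split_ifs at hij <;> omega
  · have hi := i.val_lt
    have hsucc : (i + 1).val = (i.val + 1) % n := by
      rw [ZMod.val_add, ZMod.val_one_eq_one_mod, Nat.add_mod_mod]
    apply hadj
    simp only [hsucc]
    rcases Nat.lt_or_ge (i.val + 1) n with h | h
    · rw [Nat.mod_eq_of_lt h]
      unfold interleave
      split_ifs <;> omega
    · rw [show i.val + 1 = n by omega, Nat.mod_self]
      unfold interleave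
      split_ifs <;> omega

variable [DecidableEq V]

theorem IsHamiltonianLabelling.card_le_card {n : ℕ} [NeZero n] {F : ZMod n → V}
    (hF : G.IsHamiltonianLabelling F) {A S : Finset V} (hAS : ∀ a ∈ A, ∀ u, G.Adj a u → u ∈ S) :
    #A ≤ #S ∧ (#A = #S → S.Nonempty → A ∪ S = univ) := by
  set e := Equiv.ofBijective F hF.bijective
  set σ : Equiv.Perm V := e.symm.trans ((Equiv.addRight 1).trans e)
  have hσ : ∀ v, G.Adj v (σ v) := fun v => by
    simpa [σ, e, Equiv.ofBijective_apply_symm_apply] using hF.adj (e.symm v)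
  have hσA : ∀ a ∈ A, σ a ∈ S := fun a ha => hAS a ha _ (hσ a)
  have hσA' : ∀ a ∈ A, σ.symm a ∈ S := fun a ha =>
    hAS a ha _ (by simpa using (hσ (σ.symm a)).symm)
  have hle : #A ≤ #S := card_le_card_of_injOn σ hσA σ.injective.injOn
  refine ⟨hle, fun heq hS => hF.eq_univ (hS.mono subset_union_right) fun i hi => ?_⟩
  have hσS : ∀ x ∈ S, σ x ∈ A := by
    have : A.map σ.symm.toEmbedding = S := eq_of_subset_of_card_le
      (fun x hx => by obtain ⟨a, ha, rfl⟩ := mem_map.1 hx; exact hσA' a ha) (by simp [heq])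
    simp [← this, mem_map_equiv]
  have hFσ : F (i + 1) = σ (F i) := by simp [σ, e]
  rw [hFσ]
  rcases mem_union.1 hi with hiA | hiS
  · exact mem_union_right _ (hσA _ hiA)
  · exact mem_union_left _ (hσS _ hiS)

theorem Walk.IsHamiltonianCycle.isHamiltonianLabelling {a : V} {p : G.Walk a a}
    (hp : p.IsHamiltonianCycle) :
    G.IsHamiltonianLabelling fun i : ZMod (Fintype.card V) => p.getVert i.val := by
  have hlen := hp.length_eq
  have : NeZero (Fintype.card V) := ⟨by have := hp.isCycle.three_le_length; omega⟩
  have hwrap : ∀ k ≤ Fintype.card V, p.getVert (k % Fintype.card V) = p.getVert k := by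
    intro k hk
    rcases hk.lt_or_eq with hk | rfl
    · rw [Nat.mod_eq_of_lt hk]
    · rw [Nat.mod_self, Walk.getVert_zero, ← hlen, Walk.getVert_length]
  have hinj : Function.Injective fun i : ZMod (Fintype.card V) => p.getVert i.val :=
    fun i j h => ZMod.val_injective _ <| hp.isCycle.getVert_injOn'
      (by simp only [Set.mem_ofPred_eq]; have := i.val_lt; omega)
      (by simp only [Set.mem_ofPred_eq]; have := j.val_lt; omega) h
  refine ⟨(Fintype.bijective_iff_injective_and_card _).2 ⟨hinj, by simp⟩, fun i => ?_⟩
  have hi := i.val_lt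
  rw [ZMod.val_add, ZMod.val_one_eq_one_mod, Nat.add_mod_mod, hwrap _ (by omega)]
  exact p.adj_getVert_succ (by omega)

theorem IsHamiltonianLabelling.isHamiltonian (hV : 3 ≤ Fintype.card V)
    {F : ZMod (Fintype.card V) → V} (hF : G.IsHamiltonianLabelling F) : G.IsHamiltonian := by
  set l := (List.range (Fintype.card V + 1)).map fun k : ℕ => F k
  have hne : l ≠ [] := by simp [l]
  have hchain : l.IsChain G.Adj := by
    rw [List.isChain_map, List.isChain_range_succ]
    exact fun k _ => by simpa using hF.adj k
  have hhead : l.head hne = F 0 := by simp [l]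
  have hlast : l.getLast hne = F 0 := by simp [l]
  set c := (Walk.ofSupport l hne hchain).copy hhead hlast
  have hlen : c.length = Fintype.card V := by simp [c, l]
  refine fun _ => ⟨F 0, c, ?_⟩
  rw [Walk.isHamiltonianCycle_iff_isCycle_and_length_eq,
    Walk.isCycle_iff_isPath_tail_and_le_length]
  refine ⟨⟨?_, by omega⟩, hlen⟩
  rw [Walk.isPath_def, Walk.support_tail_of_not_nil _ (Walk.not_nil_iff_lt_length.2 (by omega)),
    Walk.support_copy, Walk.support_ofSupport]
  simp only [l, List.range_succ_eq_map, List.map_cons, List.tail_cons, List.map_map]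
  refine List.Nodup.map_on (fun x hx y hy hxy => ?_) List.nodup_range
  have hxy : (x : ZMod (Fintype.card V)) = y := by simpa using hF.bijective.1 hxy
  simpa [ZMod.val_cast_of_lt (List.mem_range.1 hx), ZMod.val_cast_of_lt (List.mem_range.1 hy)]
    using congrArg ZMod.val hxy

end Labelling

variable {V : Type} [Fintype V] [DecidableEq V] {G : SimpleGraph V}

theorem deg_eq_degree [DecidableRel G.Adj] (v : V) : G.deg v = G.degree v := by
  rw [← card_neighborSet_eq_degree, ← Nat.card_eq_fintype_card]
  rfl

theorem IsThreshold.adj_of_deg_le (hG : G.IsThreshold) {u v w : V} (hdeg : G.deg u ≤ G.deg v)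
    (huw : G.Adj u w) (hvw : v ≠ w) : G.Adj v w := by
  classical
  obtain ⟨f, t, -, -, hft⟩ := hG
  rcases le_or_gt (f u) (f v) with hfuv | hfvu
  · exact (hft v w hvw).2 (by linarith [(hft u w huw.ne).1 huw])
  -- Otherwise `N(v) - u ⊆ N(u) - v`, and the degree bound forces equality.
  have hsub : (G.neighborFinset v).erase u ⊆ (G.neighborFinset u).erase v := by
    intro x hx
    simp only [mem_erase, mem_neighborFinset] at hx ⊢
    exact ⟨(G.ne_of_adj hx.2).symm, (hft u x (Ne.symm hx.1)).2
      (by linarith [(hft v x (G.ne_of_adj hx.2)).1 hx.2])⟩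
  have hcard : #((G.neighborFinset u).erase v) ≤ #((G.neighborFinset v).erase u) := by
    rw [deg_eq_degree, deg_eq_degree, ← card_neighborFinset_eq_degree,
      ← card_neighborFinset_eq_degree] at hdeg
    by_cases huv : G.Adj u v
    · rw [card_erase_of_mem (by simpa), card_erase_of_mem (by simpa using huv.symm)]
      omega
    · rwa [erase_eq_of_notMem (by simpa), erase_eq_of_notMem (by simpa [G.adj_comm])]
  have hw : w ∈ (G.neighborFinset u).erase v := by simp [huw, hvw.symm]
  rw [← eq_of_subset_of_card_le hsub hcard] at hw
  exact (mem_neighborFinset _ _ _).1 (mem_of_mem_erase hw)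

noncomputable def degClass (G : SimpleGraph V) (δ : ℕ → ℕ) (v : V) : ℕ :=
  sInf {i | G.deg v = δ i}

-- The threshold `ρ(v)` of the proof idea (junk value `0` when `v` is isolated).
noncomputable def minNeighborClass (G : SimpleGraph V) (δ : ℕ → ℕ) (v : V) : ℕ :=
  sInf {j | ∃ u, G.Adj v u ∧ G.degClass δ u = j}

theorem exists_adj_degClass_eq_minNeighborClass {δ : ℕ → ℕ} {v : V} (hv : ∃ u, G.Adj v u) :
    ∃ u, G.Adj v u ∧ G.degClass δ u = G.minNeighborClass δ v := by
  obtain ⟨u, hu⟩ := hv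
  exact Nat.sInf_mem (s := {j | ∃ u, G.Adj v u ∧ G.degClass δ u = j}) ⟨_, u, hu, rfl⟩

theorem minNeighborClass_le_degClass {δ : ℕ → ℕ} {u v : V} (h : G.Adj v u) :
    G.minNeighborClass δ v ≤ G.degClass δ u :=
  Nat.sInf_le ⟨u, h, rfl⟩

namespace DegreePartition

variable {m : ℕ} {δ : ℕ → ℕ} (hdp : G.DegreePartition m δ)
include hdp

theorem lt_iff {i j : ℕ} (hi : i ≤ m) (hj : j ≤ m) : δ i < δ j ↔ i < j := by
  refine ⟨fun h => ?_, fun h => hdp.mono i j h hj⟩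
  by_contra! hji
  rcases hji.eq_or_lt with rfl | hji
  · exact h.false
  · exact (hdp.mono j i hji hi).asymm h

theorem injOn : Set.InjOn δ (Set.Iic m) := by
  intro i hi j hj h
  by_contra hne
  rcases lt_or_gt_of_ne hne with hlt | hlt
  · exact ((hdp.lt_iff hi hj).2 hlt).ne h
  · exact ((hdp.lt_iff hj hi).2 hlt).ne' h

theorem degClass_le (v : V) : G.degClass δ v ≤ m := by
  obtain ⟨i, hi, hv⟩ := hdp.cover v
  exact (Nat.sInf_le (show i ∈ {i | G.deg v = δ i} from hv)).trans hi

theorem deg_eq (v : V) : G.deg v = δ (G.degClass δ v) := by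
  obtain ⟨i, -, hv⟩ := hdp.cover v
  exact Nat.sInf_mem (s := {i | G.deg v = δ i}) ⟨i, hv⟩

theorem degClass_eq_iff {v : V} {i : ℕ} (hi : i ≤ m) : G.degClass δ v = i ↔ G.deg v = δ i := by
  refine ⟨fun h => h ▸ hdp.deg_eq v, fun h => hdp.injOn (hdp.degClass_le v) hi ?_⟩
  rw [← hdp.deg_eq, h]

theorem mem_Dset {v : V} {i : ℕ} (hi : i ≤ m) : v ∈ G.Dset δ i ↔ G.degClass δ v = i := by
  simp [Dset, hdp.degClass_eq_iff hi]

theorem deg_le_deg_iff {u v : V} : G.deg u ≤ G.deg v ↔ G.degClass δ u ≤ G.degClass δ v := by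
  rw [hdp.deg_eq, hdp.deg_eq, ← not_lt, hdp.lt_iff (hdp.degClass_le v) (hdp.degClass_le u), not_lt]

theorem deg_lt_deg_iff {u v : V} : G.deg u < G.deg v ↔ G.degClass δ u < G.degClass δ v := by
  rw [← not_le, hdp.deg_le_deg_iff, not_le]

theorem degClass_pos_iff {v : V} : 0 < G.degClass δ v ↔ ∃ u, G.Adj v u := by
  rw [← hdp.lt_iff (Nat.zero_le m) (hdp.degClass_le v), hdp.zero, ← hdp.deg_eq, SimpleGraph.deg,
    Finite.card_pos_iff, nonempty_subtype]

theorem Dset_zero_eq_empty_iff : G.Dset δ 0 = ∅ ↔ ∀ v, 0 < G.degClass δ v := by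
  simp [eq_empty_iff_forall_notMem, hdp.mem_Dset (Nat.zero_le m), Nat.pos_iff_ne_zero]

theorem adj_iff_minNeighborClass_le (hG : G.IsThreshold) {v w : V} (hv : ∃ u, G.Adj v u)
    (hvw : v ≠ w) : G.Adj v w ↔ G.minNeighborClass δ v ≤ G.degClass δ w := by
  refine ⟨minNeighborClass_le_degClass, fun h => ?_⟩
  obtain ⟨u, hvu, hu⟩ := exists_adj_degClass_eq_minNeighborClass (δ := δ) hv
  exact (hG.adj_of_deg_le (hdp.deg_le_deg_iff.2 (hu ▸ h)) hvu.symm hvw.symm).symm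

theorem deg_eq_card_erase (hG : G.IsThreshold) {v : V} (hv : ∃ u, G.Adj v u) :
    G.deg v = #((univ.filter fun w => G.minNeighborClass δ v ≤ G.degClass δ w).erase v) := by
  classical
  rw [deg_eq_degree, ← card_neighborFinset_eq_degree]
  congr 1
  ext w
  rw [mem_neighborFinset, mem_erase, mem_filter_univ]
  by_cases hvw : v = w
  · simp [hvw]
  · rw [hdp.adj_iff_minNeighborClass_le hG hv hvw]
    exact ⟨fun h => ⟨Ne.symm hvw, h⟩, And.right⟩

theorem minNeighborClass_le_of_degClass_le (hG : G.IsThreshold) {v w : V} (hv : ∃ u, G.Adj v u)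
    (hvw : G.degClass δ v ≤ G.degClass δ w) :
    G.minNeighborClass δ w ≤ G.minNeighborClass δ v := by
  obtain ⟨u, hvu, hu⟩ := exists_adj_degClass_eq_minNeighborClass (δ := δ) hv
  by_cases huw : u = w
  · subst huw
    exact (minNeighborClass_le_degClass hvu.symm).trans (hu ▸ hvw)
  · exact hu ▸ minNeighborClass_le_degClass
      (hG.adj_of_deg_le (hdp.deg_le_deg_iff.2 hvw) hvu (Ne.symm huw))

theorem minNeighborClass_lt_of_degClass_lt (hG : G.IsThreshold) {v w : V} (hv : ∃ u, G.Adj v u)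
    (hvw : G.degClass δ v < G.degClass δ w) :
    G.minNeighborClass δ w < G.minNeighborClass δ v := by
  have hw : ∃ u, G.Adj w u := hdp.degClass_pos_iff.1 (by omega)
  refine (hdp.minNeighborClass_le_of_degClass_le hG hv hvw.le).lt_of_ne fun heq => ?_
  -- With equal thresholds, the degree formula gives `deg w ≤ deg v`.
  have hlt := hdp.deg_lt_deg_iff.2 hvw
  rw [hdp.deg_eq_card_erase hG hv, hdp.deg_eq_card_erase hG hw, heq] at hlt
  by_cases hvT : G.minNeighborClass δ v ≤ G.degClass δ v
  · rw [card_erase_of_mem (by simpa using hvT), card_erase_of_mem (by simp; omega)] at hlt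
    exact hlt.false
  · rw [erase_eq_of_notMem (by simpa using hvT)] at hlt
    exact (card_erase_le.trans_lt hlt).false

theorem minNeighborClass_mem_Icc {v : V} (hv : ∃ u, G.Adj v u) :
    G.minNeighborClass δ v ∈ Set.Icc 1 m := by
  obtain ⟨u, hvu, hu⟩ := exists_adj_degClass_eq_minNeighborClass (δ := δ) hv
  exact ⟨hu ▸ hdp.degClass_pos_iff.2 ⟨v, hvu.symm⟩, hu ▸ hdp.degClass_le u⟩

theorem minNeighborClass_eq (hG : G.IsThreshold) {v : V} (hv : 0 < G.degClass δ v) :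
    G.minNeighborClass δ v = m + 1 - G.degClass δ v := by
  have : Nonempty V := ⟨v⟩
  choose! r hr using hdp.attained
  have hrc : ∀ i ∈ Set.Icc 1 m, G.degClass δ (r i) = i := fun i hi =>
    (hdp.degClass_eq_iff hi.2).2 (hr i hi.1 hi.2)
  have hadj : ∀ i ∈ Set.Icc 1 m, ∃ u, G.Adj (r i) u := fun i hi =>
    hdp.degClass_pos_iff.1 (by rw [hrc i hi]; exact hi.1)
  have hanti : StrictAntiOn (fun i => G.minNeighborClass δ (r i)) (Set.Icc 1 m) :=
    fun i hi j hj hij => hdp.minNeighborClass_lt_of_degClass_lt hG (hadj i hi)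
      (by rwa [hrc i hi, hrc j hj])
  have hv' : G.degClass δ v ∈ Set.Icc 1 m := ⟨hv, hdp.degClass_le v⟩
  have hrv := hrc _ hv'
  rw [← Nat.eq_add_one_sub_of_strictAntiOn hanti
    (fun i hi => hdp.minNeighborClass_mem_Icc (hadj i hi)) hv']
  exact le_antisymm (hdp.minNeighborClass_le_of_degClass_le hG (hadj _ hv') hrv.le)
    (hdp.minNeighborClass_le_of_degClass_le hG (hdp.degClass_pos_iff.1 hv) hrv.ge)

theorem adj_iff (hG : G.IsThreshold) {u v : V} (huv : u ≠ v) (hu : 0 < G.degClass δ u)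
    (hv : 0 < G.degClass δ v) : G.Adj u v ↔ m + 1 ≤ G.degClass δ u + G.degClass δ v := by
  rw [hdp.adj_iff_minNeighborClass_le hG (hdp.degClass_pos_iff.1 hu) huv,
    hdp.minNeighborClass_eq hG hu]
  omega

theorem sum_card_Dset {I : Finset ℕ} (hI : ∀ i ∈ I, i ≤ m) :
    ∑ i ∈ I, #(G.Dset δ i) = #{v | G.degClass δ v ∈ I} := by
  rw [card_eq_sum_card_fiberwise (f := G.degClass δ) (t := I) (fun v hv => by simpa using hv)]
  refine sum_congr rfl fun i hi => congrArg card ?_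
  ext v
  simp only [mem_filter, mem_univ, true_and, hdp.mem_Dset (hI i hi)]
  exact ⟨fun h => ⟨h ▸ hi, h⟩, And.right⟩

theorem sum_card_Dset_Icc (h0 : G.Dset δ 0 = ∅) {k : ℕ} (hk : k ≤ m) :
    ∑ j ∈ Icc 1 k, #(G.Dset δ j) = #{v | G.degClass δ v ≤ k} := by
  rw [hdp.sum_card_Dset fun i hi => (mem_Icc.1 hi).2.trans hk]
  have := hdp.Dset_zero_eq_empty_iff.1 h0
  congr 1
  ext v
  simp [Nat.one_le_iff_ne_zero, (this v).ne']

theorem sum_card_Dset_reflect {k : ℕ} (hk : k ≤ m) :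
    ∑ j ∈ Icc 1 k, #(G.Dset δ (m + 1 - j)) = #{v | m + 1 - k ≤ G.degClass δ v} := by
  have hinj : Set.InjOn (m + 1 - ·) (Icc 1 k : Set ℕ) := fun i hi j hj h => by
    simp only [coe_Icc, Set.mem_Icc] at hi hj
    simp only at h
    omega
  rw [← sum_image (f := fun j => #(G.Dset δ j)) hinj, hdp.sum_card_Dset (by simp; omega)]
  congr 1
  ext v
  have := hdp.degClass_le v
  simp only [mem_filter_univ, mem_image, mem_Icc]
  exact ⟨fun ⟨j, hj, hjv⟩ => by omega, fun h => ⟨m + 1 - G.degClass δ v, by omega, by omega⟩⟩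

theorem card_le_card_of_isHamiltonianLabelling (hG : G.IsThreshold) {n : ℕ} [NeZero n]
    {F : ZMod n → V} (hF : G.IsHamiltonianLabelling F) (k : ℕ) :
    #{v | G.degClass δ v ≤ k} ≤ #{v | m + 1 - k ≤ G.degClass δ v} ∧
      (0 < k → 2 * k < m → #{v | G.degClass δ v ≤ k} < #{v | m + 1 - k ≤ G.degClass δ v}) := by
  have hAS : ∀ a ∈ ({v | G.degClass δ v ≤ k} : Finset V), ∀ u, G.Adj a u →
      u ∈ ({v | m + 1 - k ≤ G.degClass δ v} : Finset V) := by
    intro a ha u hau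
    have := (hdp.adj_iff hG hau.ne (hdp.degClass_pos_iff.2 ⟨u, hau⟩)
      (hdp.degClass_pos_iff.2 ⟨a, hau.symm⟩)).1 hau
    simp only [mem_filter_univ] at ha ⊢
    omega
  obtain ⟨hle, heq⟩ := hF.card_le_card hAS
  refine ⟨hle, fun hk0 hkm => hle.lt_of_ne fun h => ?_⟩
  obtain ⟨b, hb⟩ := hdp.attained (k + 1) (by omega) (by omega)
  obtain ⟨s, hs⟩ := hdp.attained m (by omega) le_rfl
  have hcover := heq h ⟨s, by simp [(hdp.degClass_eq_iff le_rfl).2 hs, hk0]⟩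
  have hb' : b ∈ _ := hcover ▸ mem_univ b
  simp only [mem_union, mem_filter_univ, (hdp.degClass_eq_iff (by omega)).2 hb] at hb'
  omega

section Sorted

variable {g : Fin (Fintype.card V) → V} (hg : Function.Bijective g)
  (hmono : Monotone (G.degClass δ ∘ g))
include hg hmono

theorem adj_of_lt_card_of_card_le (hG : G.IsThreshold) (h0 : ∀ v, 0 < G.degClass δ v)
    (hlt : ∀ k, 1 ≤ k → 2 * k < m →
      #{v | G.degClass δ v ≤ k} < #{v | m + 1 - k ≤ G.degClass δ v})
    {x y : Fin (Fintype.card V)} (hx : (x : ℕ) < #{v | G.degClass δ v ≤ m / 2})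
    (hy : #{v | G.degClass δ v ≤ m / 2} ≤ (y : ℕ)) (hxy : Fintype.card V ≤ x + y + 2) :
    G.Adj (g x) (g y) := by
  have hpos := hg.le_iff_lt_card_filter hmono
  set i := G.degClass δ (g x)
  have hi : i ≤ m / 2 := (hpos x _).2 hx
  have hxi := (hpos x i).1 le_rfl
  have hyi : m + 1 - i ≤ G.degClass δ (g y) := by
    by_contra! h
    have hy' := (hpos y (m - i)).1 (by omega)
    rcases (show 2 * i ≤ m by omega).lt_or_eq with hm | hm
    · have := hlt i (h0 _) hm
      have := card_filter_add_one_le_add_card_filter_le (G.degClass δ) (m - i)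
      rw [show m - i + 1 = m + 1 - i by omega] at this
      omega
    · rw [show m - i = m / 2 by omega] at hy'
      omega
  rw [hdp.adj_iff hG (hg.1.ne fun h => by rw [h] at hx; omega) (h0 _) (h0 _)]
  omega

theorem adj_of_card_le (hG : G.IsThreshold) {x y : Fin (Fintype.card V)}
    (hx : #{v | G.degClass δ v ≤ m / 2} ≤ (x : ℕ)) (hy : #{v | G.degClass δ v ≤ m / 2} ≤ (y : ℕ))
    (hxy : x ≠ y) : G.Adj (g x) (g y) := by
  have hpos := hg.le_iff_lt_card_filter hmono
  have hx' := (hpos x (m / 2)).not.2 (by omega)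
  have hy' := (hpos y (m / 2)).not.2 (by omega)
  rw [hdp.adj_iff hG (hg.1.ne hxy) (by omega) (by omega)]
  omega

end Sorted

theorem isHamiltonian_of_card_le (hG : G.IsThreshold) (hV : 3 ≤ Fintype.card V)
    (h0 : ∀ v, 0 < G.degClass δ v)
    (hlt : ∀ k, 1 ≤ k → 2 * k < m →
      #{v | G.degClass δ v ≤ k} < #{v | m + 1 - k ≤ G.degClass δ v})
    (hle : Even m → #{v | G.degClass δ v ≤ m / 2} ≤ #{v | m + 1 - m / 2 ≤ G.degClass δ v}) :
    G.IsHamiltonian := by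
  obtain ⟨g, hg, hmono⟩ := Fintype.exists_bijective_monotone (G.degClass δ)
  obtain ⟨F, hF⟩ := exists_isHamiltonianLabelling_of_interleave (by omega)
    (two_mul_card_filter_le_half_le h0 hlt hle) hg
    (fun _ _ hx hy hxy => hdp.adj_of_lt_card_of_card_le hg hmono hG h0 hlt hx hy hxy)
    (fun _ _ hx hy hxy => hdp.adj_of_card_le hg hmono hG hx hy hxy)
  exact hF.isHamiltonian hV

end DegreePartition

end SimpleGraph

/-- Golumbic's criterion: a threshold graph of order `n ≥ 3` is
hamiltonian iff `D_0 = ∅`, `∑_{j=1}^k |D_j| < ∑_{j=1}^k |D_{m+1-j}|` for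
`k = 1, …, ⌊(m-1)/2⌋`, and, for even `m`,
`∑_{j=1}^{m/2} |D_j| ≤ ∑_{j=1}^{m/2} |D_{m+1-j}|`. -/
theorem stmt5 {V : Type} [Fintype V] [DecidableEq V] (G : SimpleGraph V) (m : ℕ) (δ : ℕ → ℕ)
    (hn : 3 ≤ Fintype.card V) (hG : G.IsThreshold) (hdp : G.DegreePartition m δ) :
    G.IsHamiltonian ↔
      (G.Dset δ 0 = ∅ ∧
       (∀ k, 1 ≤ k → k ≤ (m - 1) / 2 →
         ∑ j ∈ Finset.Icc 1 k, (G.Dset δ j).card <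
           ∑ j ∈ Finset.Icc 1 k, (G.Dset δ (m + 1 - j)).card) ∧
       (Even m →
         ∑ j ∈ Finset.Icc 1 (m / 2), (G.Dset δ j).card ≤
           ∑ j ∈ Finset.Icc 1 (m / 2), (G.Dset δ (m + 1 - j)).card)) := by
  constructor
  · intro hham
    obtain ⟨a, p, hp⟩ := hham (by omega)
    have hF := hp.isHamiltonianLabelling
    have : NeZero (Fintype.card V) := ⟨by omega⟩
    have h0 : G.Dset δ 0 = ∅ :=
      hdp.Dset_zero_eq_empty_iff.2 fun v => hdp.degClass_pos_iff.2 (hF.exists_adj v)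
    refine ⟨h0, fun k hk1 hk => ?_, fun _ => ?_⟩
    · rw [hdp.sum_card_Dset_Icc h0 (by omega), hdp.sum_card_Dset_reflect (by omega)]
      exact (hdp.card_le_card_of_isHamiltonianLabelling hG hF k).2 hk1 (by omega)
    · rw [hdp.sum_card_Dset_Icc h0 (by omega), hdp.sum_card_Dset_reflect (by omega)]
      exact (hdp.card_le_card_of_isHamiltonianLabelling hG hF _).1
  · rintro ⟨h0, hlt, hle⟩
    refine hdp.isHamiltonian_of_card_le hG hn (hdp.Dset_zero_eq_empty_iff.1 h0)
      (fun k hk1 hk => ?_) fun hm => ?_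
    · rw [← hdp.sum_card_Dset_Icc h0 (by omega), ← hdp.sum_card_Dset_reflect (by omega)]
      exact hlt k hk1 (by omega)
    · rw [← hdp.sum_card_Dset_Icc h0 (by omega), ← hdp.sum_card_Dset_reflect (by omega)]
      exact hle hm
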